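/- Let G have finite abelianization and finite symmetric generating set S. Define □₀ = 1 and □ₙ = ∑_{s₁,…,sₙ∈S} (1-sₙ)*⋯(1-s₁)*(1-s₁)⋯(1-sₙ). Then for each n ≥ 1, □ₙ is an order unit in I[G]: for every hermitian η = η* ∈ I[G] there is λ ≥ 0 with η + λ□ₙ a sum of hermitian squares in ℝG. -/

import Mathlib

open MonoidAlgebra

variable {G : Type} [Group G]

/-- The additive map on the real group ring induced by `g ↦ g⁻¹`. -/
noncomputable def mstarHom (G : Type) [Group G] :
    MonoidAlgebra ℝ G →+ MonoidAlgebra ℝ G :=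
  { toFun := MonoidAlgebra.mapDomain Inv.inv
    map_zero' := MonoidAlgebra.mapDomain_zero _
    map_add' := MonoidAlgebra.mapDomain_add _ }

lemma mstarHom_single (a : G) (r : ℝ) :
    mstarHom G (MonoidAlgebra.single a r) = MonoidAlgebra.single a⁻¹ r :=
  MonoidAlgebra.mapDomain_single

private lemma mstar_mul (f g : MonoidAlgebra ℝ G) :
    mstarHom G (f * g) = mstarHom G g * mstarHom G f := by
  induction f using MonoidAlgebra.induction_linear with
  | zero => simp
  | add a b ha hb => simp only [add_mul, map_add, ha, hb, mul_add]
  | single a r =>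
    induction g using MonoidAlgebra.induction_linear with
    | zero => simp
    | add c d hc hd => simp only [mul_add, map_add, hc, hd, add_mul]
    | single c s =>
      simp only [MonoidAlgebra.single_mul_single, mstarHom_single, mul_inv_rev,
        mul_comm]

/-- The star ring structure on `ℝG` whose involution is induced by `g ↦ g⁻¹`. -/
noncomputable instance grpStar : StarRing (MonoidAlgebra ℝ G) where
  star f := mstarHom G f
  star_involutive f := by
    change mstarHom G (mstarHom G f) = f
    induction f using MonoidAlgebra.induction_linear with
    | zero => simp
    | add a b ha hb => rw [map_add, map_add, ha, hb]
    | single a r => rw [mstarHom_single, mstarHom_single, inv_inv]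
  star_add f g := map_add _ f g
  star_mul f g := mstar_mul f g

/-- The augmentation ideal `I[G]`, as an `ℝ`-subspace of `ℝG`: the kernel of the
augmentation homomorphism sending every group element to `1`. -/
noncomputable def Iaug (G : Type) [Group G] : Submodule ℝ (MonoidAlgebra ℝ G) :=
  LinearMap.ker ((MonoidAlgebra.lift ℝ ℝ G 1).toLinearMap)

/-- Sums of hermitian squares `∑ aᵢ* aᵢ` in a `*`-algebra. -/
noncomputable def SOS (A : Type*) [NonUnitalSemiring A] [StarRing A] : AddSubmonoid A :=
  AddSubmonoid.closure {x | ∃ a, x = star a * a}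

/-- `□₀ = 1`, `□ₙ = ∑_{s₁,…,sₙ∈S} (1-sₙ)*⋯(1-s₁)*(1-s₁)⋯(1-sₙ)`, defined by the
recursion `□_{n+1} = ∑_{s∈S} (1-s)* □ₙ (1-s)`. -/
noncomputable def box (S : Finset G) : ℕ → MonoidAlgebra ℝ G
  | 0 => 1
  | n + 1 => ∑ s ∈ S,
      star (1 - MonoidAlgebra.of ℝ G s) * box S n * (1 - MonoidAlgebra.of ℝ G s)

namespace BoxOU

local notation "A" => MonoidAlgebra ℝ G

lemma star_smul' (r : ℝ) (x : A) : star (r • x) = r • star x := by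
  show mstarHom G (r • x) = r • mstarHom G x
  exact MonoidAlgebra.mapDomain_smul _ _ _

lemma star_of (g : G) : star (of ℝ G g : A) = of ℝ G g⁻¹ := by
  show mstarHom G (MonoidAlgebra.single g 1) = _
  rw [mstarHom_single]; rfl

lemma sq_mem {a : A} : star a * a ∈ SOS A :=
  AddSubmonoid.subset_closure ⟨a, rfl⟩

lemma smul_mem {c : ℝ} (hc : 0 ≤ c) {x : A} (hx : x ∈ SOS A) : c • x ∈ SOS A := by
  induction hx using AddSubmonoid.closure_induction with
  | mem x hx =>
      obtain ⟨a, rfl⟩ := hx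
      have : c • (star a * a) = star (Real.sqrt c • a) * (Real.sqrt c • a) := by
        rw [star_smul', smul_mul_smul_comm, Real.mul_self_sqrt hc]
      rw [this]; exact sq_mem
  | zero => rw [smul_zero]; exact (SOS A).zero_mem
  | add x y _ _ hx hy => rw [smul_add]; exact (SOS A).add_mem hx hy

lemma conj_mem {x : A} (hx : x ∈ SOS A) (b : A) : star b * x * b ∈ SOS A := by
  induction hx using AddSubmonoid.closure_induction with
  | mem x hx =>
      obtain ⟨a, rfl⟩ := hx
      have : star b * (star a * a) * b = star (a * b) * (a * b) := by
        rw [star_mul]; noncomm_ring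
      rw [this]; exact sq_mem
  | zero => simpa using (SOS (MonoidAlgebra ℝ G)).zero_mem
  | add x y _ _ hx hy =>
      have : star b * (x + y) * b = star b * x * b + star b * y * b := by noncomm_ring
      rw [this]; exact (SOS A).add_mem hx hy

/-- `x ≼ y` : `y - x` is a sum of hermitian squares. -/
def sle (x y : A) : Prop := y - x ∈ SOS A

lemma sle_refl (x : A) : sle x x := by simp [sle, (SOS A).zero_mem]

lemma sle_of_mem {x : A} (hx : x ∈ SOS A) : sle 0 x := by simpa [sle] using hx

lemma sle_trans {x y z : A} (h1 : sle x y) (h2 : sle y z) : sle x z := by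
  have := (SOS A).add_mem h2 h1
  simpa [sle, sub_add_sub_cancel] using this

lemma sle_add {x y x' y' : A} (h : sle x y) (h' : sle x' y') : sle (x + x') (y + y') := by
  have := (SOS A).add_mem h h'
  simpa [sle, add_sub_add_comm] using this

lemma sle_smul {c : ℝ} (hc : 0 ≤ c) {x y : A} (h : sle x y) : sle (c • x) (c • y) := by
  have := smul_mem hc h
  simpa [sle, smul_sub] using this

lemma sle_conj {x y : A} (h : sle x y) (b : A) : sle (star b * x * b) (star b * y * b) := by
  have := conj_mem h b
  have e : star b * (y - x) * b = star b * y * b - star b * x * b := by noncomm_ring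
  rw [sle, ← e]; exact this

lemma sle_add_left {x y : A} (h : sle x y) (z : A) : sle (z + x) (z + y) :=
  sle_add (sle_refl z) h

lemma sle_of_sub_mem {x y : A} (h : y - x ∈ SOS A) : sle x y := h
lemma sle_sum {ι : Type*} {t : Finset ι} {f g : ι → A}
    (h : ∀ i ∈ t, sle (f i) (g i)) : sle (∑ i ∈ t, f i) (∑ i ∈ t, g i) := by
  rw [sle, ← Finset.sum_sub_distrib]
  exact AddSubmonoid.sum_mem _ h

lemma sle_cross {M : A} (hM : M ∈ SOS A) (u v : A) :
    sle (star u * M * v + star v * M * u) (star u * M * u + star v * M * v) := by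
  rw [sle]
  have e : star u * M * u + star v * M * v - (star u * M * v + star v * M * u)
      = star (u - v) * M * (u - v) := by
    rw [star_sub]; noncomm_ring
  rw [e]; exact conj_mem hM _

lemma sle_sq_add {M : A} (hM : M ∈ SOS A) (u v : A) :
    sle (star (u + v) * M * (u + v))
      ((2:ℝ) • (star u * M * u) + (2:ℝ) • (star v * M * v)) := by
  have e : star (u + v) * M * (u + v)
      = (star u * M * u + star v * M * v) + (star u * M * v + star v * M * u) := by
    rw [star_add]; noncomm_ring
  have h1 := sle_add_left (sle_cross hM u v) (star u * M * u + star v * M * v)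
  rw [← e] at h1
  refine sle_trans h1 (sle_of_sub_mem ?_)
  have e2 : (2:ℝ) • (star u * M * u) + (2:ℝ) • (star v * M * v) -
      (star u * M * u + star v * M * v + (star u * M * u + star v * M * v)) = 0 := by
    rw [two_smul, two_smul]; abel
  rw [e2]; exact (SOS A).zero_mem

/-- generalized Cauchy–Schwarz with an SOS middle term (constant `2 ^ card`). -/
lemma sle_sum_sq {ι : Type*} (t : Finset ι) (a : ι → A) {M : A} (hM : M ∈ SOS A) :
    sle (star (∑ i ∈ t, a i) * M * (∑ i ∈ t, a i))
      (((2:ℝ) ^ t.card) • ∑ i ∈ t, star (a i) * M * (a i)) := by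
  classical
  induction t using Finset.induction with
  | empty => simp [sle, (SOS A).zero_mem]
  | @insert i t hi ih =>
      rw [Finset.sum_insert hi, Finset.sum_insert hi, Finset.card_insert_of_notMem hi]
      refine sle_trans (sle_sq_add hM _ _) ?_
      rw [sle]
      have h2 : ((2:ℝ)^(t.card+1) - 2) • (star (a i) * M * (a i)) ∈ SOS A := by
        refine smul_mem ?_ (conj_mem hM _)
        have : (2:ℝ) ≤ 2 ^ (t.card + 1) := by
          calc (2:ℝ) = 2^1 := (pow_one 2).symm
          _ ≤ 2^(t.card+1) := by
            apply pow_le_pow_right₀ (by norm_num) (by omega)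
        linarith
      have h3 : ((2:ℝ)) • (((2:ℝ) ^ t.card) • ∑ i ∈ t, star (a i) * M * (a i))
          - (2:ℝ) • (star (∑ i ∈ t, a i) * M * (∑ i ∈ t, a i)) ∈ SOS A := by
        have := sle_smul (by norm_num : (0:ℝ) ≤ 2) ih
        exact this
      have e : (2:ℝ)^(t.card+1) • (star (a i) * M * (a i) + ∑ j ∈ t, star (a j) * M * (a j))
          - ((2:ℝ) • (star (a i) * M * (a i)) + (2:ℝ) • (star (∑ j ∈ t, a j) * M * (∑ j ∈ t, a j)))
          = (((2:ℝ)^(t.card+1) - 2) • (star (a i) * M * (a i)))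
            + ((2:ℝ) • (((2:ℝ) ^ t.card) • ∑ j ∈ t, star (a j) * M * (a j))
              - (2:ℝ) • (star (∑ j ∈ t, a j) * M * (∑ j ∈ t, a j))) := by
        rw [pow_succ]
        module
      rw [e]
      exact (SOS A).add_mem h2 h3

-- augmentation
noncomputable abbrev aug : MonoidAlgebra ℝ G →ₐ[ℝ] ℝ := MonoidAlgebra.lift ℝ ℝ G 1

lemma mem_Iaug_iff {x : A} : x ∈ Iaug G ↔ aug x = 0 := Iff.rfl

lemma aug_of (g : G) : aug (of ℝ G g : A) = 1 := by
  simp [aug]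

lemma one_sub_mem (g : G) : (1 - of ℝ G g : A) ∈ Iaug G := by
  rw [mem_Iaug_iff, map_sub, map_one, aug_of, sub_self]

lemma Iaug_mul_right {x : A} (hx : x ∈ Iaug G) (a : A) : x * a ∈ Iaug G := by
  rw [mem_Iaug_iff, map_mul, mem_Iaug_iff.1 hx, zero_mul]

lemma Iaug_mul_left {x : A} (hx : x ∈ Iaug G) (a : A) : a * x ∈ Iaug G := by
  rw [mem_Iaug_iff, map_mul, mem_Iaug_iff.1 hx, mul_zero]

lemma aug_single (g : G) (r : ℝ) : aug (MonoidAlgebra.single g r : A) = r := by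
  simp [aug]

lemma aug_mstar (x : A) : aug (mstarHom G x) = aug x := by
  induction x using MonoidAlgebra.induction_linear with
  | zero => simp
  | add a b ha hb => rw [map_add, map_add, map_add, ha, hb]
  | single g r => rw [mstarHom_single, aug_single, aug_single]

lemma aug_star (x : A) : aug (star x) = aug x := aug_mstar x

lemma star_mem_Iaug {x : A} (hx : x ∈ Iaug G) : star x ∈ Iaug G := by
  rw [mem_Iaug_iff, aug_star]; exact hx

-- group ring identities
lemma of_mul (g h : G) : (of ℝ G g : A) * of ℝ G h = of ℝ G (g * h) :=
  (map_mul (of ℝ G) g h).symm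

lemma star_one_sub (g : G) : star (1 - of ℝ G g : A) = 1 - of ℝ G g⁻¹ := by
  rw [star_sub, star_one, star_of]

lemma of_inv_mul_of (g : G) : (of ℝ G g⁻¹ : A) * of ℝ G g = 1 := by
  rw [of_mul, inv_mul_cancel, map_one]

/-- `1 - gh = (1-g) + g(1-h)`. -/
lemma one_sub_mul (g h : G) :
    (1 - of ℝ G (g * h) : A) = (1 - of ℝ G g) + of ℝ G g * (1 - of ℝ G h) := by
  rw [mul_sub, mul_one, of_mul]; abel

-- the submonoid generated by a symmetric generating set is everything
lemma mem_submonoid_closure {S : Finset G} (hS : Subgroup.closure (S : Set G) = ⊤)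
    (hsym : ∀ s ∈ S, s⁻¹ ∈ S) (g : G) : g ∈ Submonoid.closure (S : Set G) := by
  have hg : g ∈ Subgroup.closure (S : Set G) := hS ▸ Subgroup.mem_top g
  have key : ∀ x ∈ Submonoid.closure (S : Set G), x⁻¹ ∈ Submonoid.closure (S : Set G) := by
    intro x hx
    induction hx using Submonoid.closure_induction with
    | mem y hy => exact Submonoid.subset_closure (hsym y hy)
    | one => simpa using Submonoid.one_mem _
    | mul x y _ _ hx hy => rw [mul_inv_rev]; exact Submonoid.mul_mem _ hy hx
  induction hg using Subgroup.closure_induction with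
  | mem y hy => exact Submonoid.subset_closure hy
  | one => exact Submonoid.one_mem _
  | mul x y _ _ hx hy => exact Submonoid.mul_mem _ hx hy
  | inv x _ hx => exact key x hx

variable (S : Finset G)

lemma box_one_eq : box S 1 = ∑ s ∈ S, star (1 - of ℝ G s) * (1 - of ℝ G s) := by
  show (∑ s ∈ S, star (1 - of ℝ G s) * box S 0 * (1 - of ℝ G s)) = _
  simp [box]

lemma box_mem_SOS (n : ℕ) (hn : 1 ≤ n) : box S n ∈ SOS A := by
  induction n with
  | zero => omega
  | succ n ih =>
      show (∑ s ∈ S, star (1 - of ℝ G s) * box S n * (1 - of ℝ G s)) ∈ SOS A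
      rcases Nat.eq_zero_or_pos n with h | h
      · subst h
        simp only [box, mul_one]
        exact AddSubmonoid.sum_mem _ (fun s _ => sq_mem)
      · exact AddSubmonoid.sum_mem _ (fun s _ => conj_mem (ih h) _)

lemma one_mem_SOS : (1 : A) ∈ SOS A := by
  have := sq_mem (a := (1 : A))
  rwa [star_one, one_mul] at this

lemma conj_of_sq (g : G) (w : A) :
    star ((of ℝ G g : A) * w) * (of ℝ G g * w) = star w * w := by
  rw [star_mul, star_of, mul_assoc, ← mul_assoc (of ℝ G g⁻¹), of_inv_mul_of, one_mul]

/-- two smul-bounds combine. -/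
lemma sle_two_two {x y u : A} {c d : ℝ} (hc : 0 ≤ c) (hd : 0 ≤ d)
    (hx : sle x (c • u)) (hy : sle y (d • u)) :
    sle ((2:ℝ) • x + (2:ℝ) • y) ((2 * c + 2 * d) • u) := by
  have h := sle_add (sle_smul (by norm_num : (0:ℝ) ≤ 2) hx)
    (sle_smul (by norm_num : (0:ℝ) ≤ 2) hy)
  rwa [smul_smul, smul_smul, ← add_smul] at h

variable {S : Finset G}

/-- Each `(1-g)*(1-g)` is dominated by a multiple of the Laplacian `□₁`. -/
lemma sq_le_lap (hS : Subgroup.closure (S : Set G) = ⊤) (hsym : ∀ s ∈ S, s⁻¹ ∈ S)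
    (g : G) : ∃ c : ℝ, 0 ≤ c ∧
      sle (star (1 - of ℝ G g) * (1 - of ℝ G g)) (c • box S 1) := by
  classical
  have hg := mem_submonoid_closure hS hsym g
  induction hg using Submonoid.closure_induction with
  | mem s hs =>
      refine ⟨1, zero_le_one, ?_⟩
      rw [one_smul, box_one_eq, sle, ← Finset.add_sum_erase S _ hs, add_sub_cancel_left]
      exact AddSubmonoid.sum_mem _ (fun s _ => sq_mem)
  | one =>
      refine ⟨0, le_refl 0, ?_⟩
      rw [map_one, sub_self, mul_zero, zero_smul]
      exact sle_refl 0
  | mul g h _ _ ihg ihh =>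
      obtain ⟨c, hc, hcle⟩ := ihg
      obtain ⟨d, hd, hdle⟩ := ihh
      refine ⟨2 * c + 2 * d, by positivity, ?_⟩
      rw [one_sub_mul]
      have h1 := sle_sq_add one_mem_SOS (1 - of ℝ G g) (of ℝ G g * (1 - of ℝ G h))
      simp only [mul_one] at h1
      rw [conj_of_sq] at h1
      exact sle_trans h1 (sle_two_two hc hd hcle hdle)

lemma conj_mid (g : G) (w M : A) :
    star ((of ℝ G g : A) * w) * M * (of ℝ G g * w)
      = star w * (star (of ℝ G g) * M * of ℝ G g) * w := by
  rw [star_mul]; noncomm_ring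

lemma conj_smul_mid (b : A) (C : ℝ) (M : A) :
    star b * (C • M) * b = C • (star b * M * b) := by
  rw [mul_smul_comm, smul_mul_assoc]

lemma sq_conj_elt (s g : G) :
    star (of ℝ G g : A) * (star (1 - of ℝ G s) * (1 - of ℝ G s)) * of ℝ G g
      = star (1 - of ℝ G (g⁻¹ * s * g)) * (1 - of ℝ G (g⁻¹ * s * g)) := by
  have h1 : (1 - of ℝ G s : A) * of ℝ G g = of ℝ G g * (1 - of ℝ G (g⁻¹ * s * g)) := by
    rw [sub_mul, one_mul, mul_sub, mul_one, of_mul, of_mul]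
    congr 2
    group
  calc star (of ℝ G g : A) * (star (1 - of ℝ G s) * (1 - of ℝ G s)) * of ℝ G g
      = star ((1 - of ℝ G s) * of ℝ G g) * ((1 - of ℝ G s) * of ℝ G g) := by
        rw [star_mul]; noncomm_ring
    _ = star (of ℝ G g * (1 - of ℝ G (g⁻¹ * s * g)))
        * (of ℝ G g * (1 - of ℝ G (g⁻¹ * s * g))) := by rw [h1]
    _ = _ := conj_of_sq _ _

/-- The conjugated Laplacian `g⁻¹ Δ g` is dominated by a multiple of `Δ`. -/
lemma conj_lap_le (hS : Subgroup.closure (S : Set G) = ⊤) (hsym : ∀ s ∈ S, s⁻¹ ∈ S)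
    (g : G) : ∃ C : ℝ, 0 ≤ C ∧
      sle (star (of ℝ G g : A) * box S 1 * of ℝ G g) (C • box S 1) := by
  classical
  choose c hc hle using sq_le_lap (S := S) hS hsym
  refine ⟨∑ s ∈ S, c (g⁻¹ * s * g), Finset.sum_nonneg (fun s _ => hc _), ?_⟩
  have e : star (of ℝ G g : A) * box S 1 * of ℝ G g
      = ∑ s ∈ S, star (1 - of ℝ G (g⁻¹ * s * g)) * (1 - of ℝ G (g⁻¹ * s * g)) := by
    rw [box_one_eq, Finset.mul_sum, Finset.sum_mul]
    exact Finset.sum_congr rfl (fun s _ => sq_conj_elt s g)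
  rw [e, Finset.sum_smul]
  exact sle_sum (fun s _ => hle _)

lemma box_two_eq : box S 2
    = ∑ s ∈ S, star (1 - of ℝ G s) * box S 1 * (1 - of ℝ G s) := rfl

/-- `(1-g)* Δ (1-g)` is dominated by a multiple of `□₂`. -/
lemma midlap_le (hS : Subgroup.closure (S : Set G) = ⊤) (hsym : ∀ s ∈ S, s⁻¹ ∈ S)
    (g : G) : ∃ c : ℝ, 0 ≤ c ∧
      sle (star (1 - of ℝ G g) * box S 1 * (1 - of ℝ G g)) (c • box S 2) := by
  classical
  have hΔ : box S 1 ∈ SOS A := box_mem_SOS S 1 le_rfl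
  have hg := mem_submonoid_closure hS hsym g
  induction hg using Submonoid.closure_induction with
  | mem s hs =>
      refine ⟨1, zero_le_one, ?_⟩
      rw [one_smul, box_two_eq, sle, ← Finset.add_sum_erase S _ hs, add_sub_cancel_left]
      exact AddSubmonoid.sum_mem _ (fun s _ => conj_mem hΔ _)
  | one =>
      refine ⟨0, le_refl 0, ?_⟩
      rw [map_one, sub_self, mul_zero, zero_smul]
      exact sle_refl 0
  | mul g h _ _ ihg ihh =>
      obtain ⟨c, hc, hcle⟩ := ihg
      obtain ⟨d, hd, hdle⟩ := ihh
      obtain ⟨C, hC, hCle⟩ := conj_lap_le hS hsym g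
      refine ⟨2 * c + 2 * (C * d), by positivity, ?_⟩
      rw [one_sub_mul]
      have h1 := sle_sq_add hΔ (1 - of ℝ G g) (of ℝ G g * (1 - of ℝ G h))
      rw [conj_mid] at h1
      have h2 : sle (star (1 - of ℝ G h) * (star (of ℝ G g : A) * box S 1 * of ℝ G g)
            * (1 - of ℝ G h)) ((C * d) • box S 2) := by
        have h3 := sle_conj hCle (1 - of ℝ G h)
        rw [conj_smul_mid] at h3
        refine sle_trans h3 ?_
        have h4 := sle_smul hC hdle
        rwa [smul_smul] at h4
      exact sle_trans h1 (sle_two_two hc (by positivity) hcle h2)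

lemma aug_eq_sum (y : A) : aug y = ∑ g ∈ y.coeff.support, y.coeff g := by
  rw [aug, MonoidAlgebra.lift_apply]
  simp [Finsupp.sum]

lemma support_decomp {y : A} (hy : y ∈ Iaug G) :
    y = ∑ g ∈ y.coeff.support, y.coeff g • (of ℝ G g - 1) := by
  have h0 : ∑ g ∈ y.coeff.support, y.coeff g = 0 := by rw [← aug_eq_sum]; exact hy
  have h1 : ∑ g ∈ y.coeff.support, y.coeff g • (of ℝ G g : A) = y := by
    calc ∑ g ∈ y.coeff.support, y.coeff g • (of ℝ G g : A)
        = ∑ g ∈ y.coeff.support, MonoidAlgebra.single g (y.coeff g) := by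
          refine Finset.sum_congr rfl (fun g _ => ?_)
          simp [MonoidAlgebra.of_apply, MonoidAlgebra.smul_single']
      _ = y := by
          conv_rhs => rw [← MonoidAlgebra.sum_coeff_single y, Finsupp.sum]
  calc y = ∑ g ∈ y.coeff.support, y.coeff g • (of ℝ G g : A) - (∑ g ∈ y.coeff.support, y.coeff g) • (1:A) := by
        rw [h1, h0, zero_smul, sub_zero]
    _ = ∑ g ∈ y.coeff.support, y.coeff g • (of ℝ G g - 1) := by
        rw [Finset.sum_smul, ← Finset.sum_sub_distrib]
        exact Finset.sum_congr rfl (fun g _ => (smul_sub _ _ _).symm)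

lemma smul_sq_mid (r : ℝ) (u M v : A) : (r • u) * M * (r • v) = (r * r) • (u * M * v) := by
  rw [smul_mul_assoc, smul_mul_assoc, mul_smul_comm, smul_smul]

lemma neg_mid (u M v : A) : (-u) * M * (-v) = u * M * v := by noncomm_ring

set_option maxHeartbeats 1000000 in
/-- Generic bound: if `(1-g)* M (1-g) ≼ c_g N` for all `g`, then for any `y ∈ I[G]`,
`y* M y ≼ c N`. -/
lemma mid_quad_le {M N : A} (hM : M ∈ SOS A)
    (hb : ∀ g : G, ∃ c : ℝ, 0 ≤ c ∧
      sle (star (1 - of ℝ G g) * M * (1 - of ℝ G g)) (c • N))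
    {y : A} (hy : y ∈ Iaug G) :
    ∃ c : ℝ, 0 ≤ c ∧ sle (star y * M * y) (c • N) := by
  classical
  choose c hc hle using hb
  refine ⟨(2:ℝ) ^ y.coeff.support.card * ∑ g ∈ y.coeff.support, (y.coeff g * y.coeff g) * c g, ?_, ?_⟩
  · apply mul_nonneg (by positivity)
    exact Finset.sum_nonneg fun g _ => mul_nonneg (mul_self_nonneg _) (hc g)
  · have h1 := sle_sum_sq y.coeff.support (fun g => y.coeff g • (of ℝ G g - 1)) hM
    rw [← support_decomp hy] at h1
    refine sle_trans h1 ?_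
    have h2 : ∀ g ∈ y.coeff.support,
        sle (star (y.coeff g • (of ℝ G g - 1)) * M * (y.coeff g • (of ℝ G g - 1)))
          (((y.coeff g * y.coeff g) * c g) • N) := by
      intro g _
      have e : star (y.coeff g • (of ℝ G g - 1)) * M * (y.coeff g • (of ℝ G g - 1))
          = (y.coeff g * y.coeff g) • (star (1 - of ℝ G g) * M * (1 - of ℝ G g)) := by
        rw [star_smul', smul_sq_mid]
        congr 1
        have e2 : star ((of ℝ G g : A) - 1) = -(star (1 - of ℝ G g)) := by
          rw [← star_neg]; congr 1; abel
        rw [e2, ← neg_mid (star (1 - of ℝ G g)) M (1 - of ℝ G g)]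
        congr 1
        abel
      have step := sle_smul (mul_self_nonneg (y.coeff g)) (hle g)
      rw [smul_smul] at step
      rw [sle] at step ⊢
      rw [e]
      exact step
    have h3 := sle_sum h2
    have h4 := sle_smul (show (0:ℝ) ≤ (2:ℝ) ^ y.coeff.support.card by positivity) h3
    rwa [← Finset.sum_smul, smul_smul] at h4

/-- `x* x ≼ c Δ` for `x` in the augmentation ideal. -/
lemma xsq_le_lap (hS : Subgroup.closure (S : Set G) = ⊤) (hsym : ∀ s ∈ S, s⁻¹ ∈ S)
    {x : A} (hx : x ∈ Iaug G) :
    ∃ c : ℝ, 0 ≤ c ∧ sle (star x * x) (c • box S 1) := by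
  have hb : ∀ g : G, ∃ c : ℝ, 0 ≤ c ∧
      sle (star (1 - of ℝ G g) * 1 * (1 - of ℝ G g)) (c • box S 1) := by
    intro g
    obtain ⟨c, hc, hle⟩ := sq_le_lap hS hsym g
    exact ⟨c, hc, by rwa [mul_one]⟩
  obtain ⟨c, hc, hle⟩ := mid_quad_le one_mem_SOS hb hx
  rw [mul_one] at hle
  exact ⟨c, hc, hle⟩

/-- `y* Δ y ≼ c □₂` for `y` in the augmentation ideal. -/
lemma ylap_le (hS : Subgroup.closure (S : Set G) = ⊤) (hsym : ∀ s ∈ S, s⁻¹ ∈ S)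
    {y : A} (hy : y ∈ Iaug G) :
    ∃ c : ℝ, 0 ≤ c ∧ sle (star y * box S 1 * y) (c • box S 2) :=
  mid_quad_le (box_mem_SOS S 1 le_rfl) (midlap_le hS hsym) hy

/-- For `ξ ∈ I[G]²`, `ξ* ξ ≼ c □₂`. -/
lemma Isq_le_boxtwo (hS : Subgroup.closure (S : Set G) = ⊤) (hsym : ∀ s ∈ S, s⁻¹ ∈ S)
    {ξ : A} (hξ : ξ ∈ Iaug G * Iaug G) :
    ∃ c : ℝ, 0 ≤ c ∧ sle (star ξ * ξ) (c • box S 2) := by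
  refine Submodule.mul_induction_on hξ (fun x hx y hy => ?_) (fun x y hx hy => ?_)
  ·
      obtain ⟨cx, hcx, hxle⟩ := xsq_le_lap hS hsym hx
      obtain ⟨cy, hcy, hyle⟩ := ylap_le hS hsym hy
      refine ⟨cx * cy, mul_nonneg hcx hcy, ?_⟩
      have e : star (x * y) * (x * y) = star y * (star x * x) * y := by
        rw [star_mul]; noncomm_ring
      rw [e]
      have h1 := sle_conj hxle y
      rw [conj_smul_mid] at h1
      refine sle_trans h1 ?_
      have h2 := sle_smul hcx hyle
      rwa [smul_smul] at h2
  ·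
      obtain ⟨c1, hc1, h1⟩ := hx
      obtain ⟨c2, hc2, h2⟩ := hy
      refine ⟨2 * c1 + 2 * c2, by positivity, ?_⟩
      have h3 := sle_sq_add one_mem_SOS x y
      simp only [mul_one] at h3
      exact sle_trans h3 (sle_two_two hc1 hc2 h1 h2)

lemma Isq_mul_left {x : A} (hx : x ∈ Iaug G * Iaug G) (a : A) :
    a * x ∈ Iaug G * Iaug G := by
  refine Submodule.mul_induction_on hx (fun m hm n hn => ?_) (fun u v hu hv => ?_)
  · rw [← mul_assoc]
    exact Submodule.mul_mem_mul (Iaug_mul_left hm a) hn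
  · rw [mul_add]; exact Submodule.add_mem _ hu hv

lemma Isq_mul_right {x : A} (hx : x ∈ Iaug G * Iaug G) (a : A) :
    x * a ∈ Iaug G * Iaug G := by
  refine Submodule.mul_induction_on hx (fun m hm n hn => ?_) (fun u v hu hv => ?_)
  · rw [mul_assoc]
    exact Submodule.mul_mem_mul hm (Iaug_mul_right hn a)
  · rw [add_mul]; exact Submodule.add_mem _ hu hv

open scoped commutatorElement in
lemma comm_mem_Isq (a b : G) : (1 - of ℝ G ⁅a, b⁆ : A) ∈ Iaug G * Iaug G := by
  have h1 : ((1 - of ℝ G b) * (1 - of ℝ G a) - (1 - of ℝ G a) * (1 - of ℝ G b) : A)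
      = of ℝ G (b * a) - of ℝ G (a * b) := by
    simp only [sub_mul, mul_sub, one_mul, mul_one, of_mul]
    abel
  have e : (1 - of ℝ G ⁅a, b⁆ : A)
      = ((1 - of ℝ G b) * (1 - of ℝ G a) - (1 - of ℝ G a) * (1 - of ℝ G b))
        * of ℝ G (a⁻¹ * b⁻¹) := by
    rw [h1, sub_mul, of_mul, of_mul]
    have e1 : b * a * (a⁻¹ * b⁻¹) = 1 := by group
    have e2 : a * b * (a⁻¹ * b⁻¹) = ⁅a, b⁆ := by
      rw [commutatorElement_def]; group
    rw [e1, e2, map_one]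
  rw [e]
  refine Isq_mul_right (Submodule.sub_mem _ ?_ ?_) _
  · exact Submodule.mul_mem_mul (one_sub_mem b) (one_sub_mem a)
  · exact Submodule.mul_mem_mul (one_sub_mem a) (one_sub_mem b)

lemma commutator_mem_Isq {g : G} (hg : g ∈ commutator G) :
    (1 - of ℝ G g : A) ∈ Iaug G * Iaug G := by
  rw [commutator_eq_closure] at hg
  induction hg using Subgroup.closure_induction with
  | mem x hx =>
      obtain ⟨a, b, rfl⟩ := hx
      exact comm_mem_Isq a b
  | one => rw [map_one, sub_self]; exact Submodule.zero_mem _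
  | mul x y _ _ hx hy =>
      rw [one_sub_mul]
      exact Submodule.add_mem _ hx (Isq_mul_left hy _)
  | inv x _ hx =>
      have e : (1 - of ℝ G x⁻¹ : A) = -(of ℝ G x⁻¹ * (1 - of ℝ G x)) := by
        rw [mul_sub, mul_one, of_mul, inv_mul_cancel, map_one]
        abel
      rw [e]
      exact Submodule.neg_mem _ (Isq_mul_left hx _)

/-- If the abelianization is finite, `I[G] = I[G]²`: each `1 - g` lies in `I[G]²`. -/
lemma one_sub_mem_Isq [Finite (Abelianization G)] (g : G) :
    (1 - of ℝ G g : A) ∈ Iaug G * Iaug G := by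
  set m := orderOf (Abelianization.of g) with hm
  have hmpos : 0 < m := orderOf_pos _
  have hgm : g ^ m ∈ commutator G := by
    have : Abelianization.of (g ^ m) = 1 := by
      rw [map_pow, pow_orderOf_eq_one]
    exact (QuotientGroup.eq_one_iff _).mp this
  set x : A := of ℝ G g with hx
  set z : A := ∑ i ∈ Finset.range m, (1 - of ℝ G (g ^ i)) with hz
  have hzI : z ∈ Iaug G := Submodule.sum_mem _ (fun i _ => one_sub_mem _)
  have hgeo : (∑ i ∈ Finset.range m, x ^ i) * (x - 1) = x ^ m - 1 := geom_sum_mul x m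
  have hsum : (∑ i ∈ Finset.range m, x ^ i) = (m : ℝ) • (1 : A) - z := by
    rw [hz, Finset.sum_sub_distrib]
    have : ∑ _i ∈ Finset.range m, (1 : A) = (m : ℝ) • (1 : A) := by
      rw [Finset.sum_const, Finset.card_range, Nat.cast_smul_eq_nsmul]
    rw [this]
    have : ∑ i ∈ Finset.range m, (of ℝ G (g ^ i) : A) = ∑ i ∈ Finset.range m, x ^ i := by
      refine Finset.sum_congr rfl (fun i _ => ?_)
      rw [hx, ← map_pow]
    rw [this]
    abel
  have key : (m : ℝ) • (x - 1) = (x ^ m - 1) + z * (x - 1) := by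
    rw [← hgeo, hsum, sub_mul, smul_mul_assoc, one_mul]
    abel
  have hmem : (m : ℝ) • (x - 1) ∈ Iaug G * Iaug G := by
    rw [key]
    refine Submodule.add_mem _ ?_ ?_
    · have : (x ^ m - 1 : A) = -(1 - of ℝ G (g ^ m)) := by
        rw [hx, ← map_pow]; abel
      rw [this]
      exact Submodule.neg_mem _ (commutator_mem_Isq hgm)
    · refine Submodule.mul_mem_mul hzI ?_
      have : (x - 1 : A) = -(1 - of ℝ G g) := by rw [hx]; abel
      rw [this]
      exact Submodule.neg_mem _ (one_sub_mem g)
  have : (1 - of ℝ G g : A) = -((1 / (m : ℝ)) • ((m : ℝ) • (x - 1))) := by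
    rw [smul_smul, one_div, inv_mul_cancel₀ (by exact_mod_cast hmpos.ne')]
    rw [one_smul, hx]
    abel
  rw [this]
  exact Submodule.neg_mem _ (Submodule.smul_mem _ _ hmem)

lemma sle_mem {x y : A} (h : sle x y) : y - x ∈ SOS A := h

/-- The Laplacian `□₁` is dominated by a multiple of `□₂` (finite abelianization). -/
lemma lap_le_boxtwo [Finite (Abelianization G)] (hS : Subgroup.closure (S : Set G) = ⊤)
    (hsym : ∀ s ∈ S, s⁻¹ ∈ S) :
    ∃ c : ℝ, 0 ≤ c ∧ sle (box S 1) (c • box S 2) := by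
  classical
  choose c hc hle using fun s : G => Isq_le_boxtwo hS hsym (one_sub_mem_Isq s)
  refine ⟨∑ s ∈ S, c s, Finset.sum_nonneg (fun s _ => hc s), ?_⟩
  rw [box_one_eq, Finset.sum_smul]
  exact sle_sum (fun s _ => hle s)

/-- `□₁` is dominated by a multiple of `□ₙ` for every `n ≥ 1`. -/
lemma lap_le_box [Finite (Abelianization G)] (hS : Subgroup.closure (S : Set G) = ⊤)
    (hsym : ∀ s ∈ S, s⁻¹ ∈ S) (n : ℕ) (hn : 1 ≤ n) :
    ∃ c : ℝ, 0 ≤ c ∧ sle (box S 1) (c • box S n) := by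
  induction n, hn using Nat.le_induction with
  | base => exact ⟨1, zero_le_one, by rw [one_smul]; exact sle_refl _⟩
  | succ n hn ih =>
      obtain ⟨c, hc, hcle⟩ := ih
      obtain ⟨c₂, hc₂, hc₂le⟩ := lap_le_boxtwo hS hsym
      refine ⟨c₂ * c, mul_nonneg hc₂ hc, ?_⟩
      have h1 : sle (box S 2) (c • box S (n + 1)) := by
        have h2 : ∀ s ∈ S, sle (star (1 - of ℝ G s) * box S 1 * (1 - of ℝ G s))
            (c • (star (1 - of ℝ G s) * box S n * (1 - of ℝ G s))) := by
          intro s _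
          have := sle_conj hcle (1 - of ℝ G s)
          rwa [conj_smul_mid] at this
        have h3 := sle_sum h2
        rw [← Finset.smul_sum] at h3
        exact h3
      refine sle_trans hc₂le ?_
      have h4 := sle_smul hc₂ h1
      rwa [smul_smul] at h4

lemma star_decomp (y : A) : star y = ∑ g ∈ y.coeff.support, y.coeff g • (of ℝ G g⁻¹ : A) := by
  show mstarHom G y = _
  show MonoidAlgebra.mapDomain Inv.inv y = _
  rw [MonoidAlgebra.mapDomain, Finsupp.mapDomain, Finsupp.sum, MonoidAlgebra.ofCoeff_sum]
  refine Finset.sum_congr rfl (fun g _ => ?_)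
  rw [MonoidAlgebra.ofCoeff_single, MonoidAlgebra.of_apply, MonoidAlgebra.smul_single', mul_one]

lemma q_eq (g : G) : star (1 - of ℝ G g) * (1 - of ℝ G g)
    = (2:ℝ) • (1:A) - of ℝ G g - of ℝ G g⁻¹ := by
  rw [star_one_sub, sub_mul, one_mul, mul_sub, mul_one, of_inv_mul_of, two_smul]
  abel

lemma sum_smul_of (y : A) : ∑ g ∈ y.coeff.support, y.coeff g • (of ℝ G g : A) = y := by
  calc ∑ g ∈ y.coeff.support, y.coeff g • (of ℝ G g : A)
      = ∑ g ∈ y.coeff.support, MonoidAlgebra.single g (y.coeff g) := by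
        refine Finset.sum_congr rfl (fun g _ => ?_)
        simp [MonoidAlgebra.of_apply, MonoidAlgebra.smul_single']
    _ = y := by
        conv_rhs => rw [← MonoidAlgebra.sum_coeff_single y, Finsupp.sum]

end BoxOU

/-- For `G` with finite abelianization and finite symmetric generating set `S`,
each `□ₙ`, `n ≥ 1`, is an order unit in `I[G]`. -/
theorem box_order_unit (G : Type) [Group G] [Finite (Abelianization G)]
    (S : Finset G) (hS : Subgroup.closure (S : Set G) = ⊤)
    (hsym : ∀ s ∈ S, s⁻¹ ∈ S) (n : ℕ) (hn : 1 ≤ n) :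
    ∀ η ∈ Iaug G, star η = η →
      ∃ l : ℝ, 0 ≤ l ∧ η + l • box S n ∈ SOS (MonoidAlgebra ℝ G) := by
  open BoxOU in
  (classical
     intro η hη hstar
     have hsupp0 : ∑ g ∈ η.coeff.support, η.coeff g = 0 := by rw [← aug_eq_sum]; exact hη
     choose cq hcq hleq using sq_le_lap (S := S) hS hsym
     set lam : ℝ := ∑ g ∈ η.coeff.support, (|η.coeff g| / 2) * cq g with hlam_def
     have hlam : 0 ≤ lam :=
       Finset.sum_nonneg fun g _ => mul_nonneg (by positivity) (hcq g)
     have hd1 : ∀ g ∈ η.coeff.support,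
         (-(η.coeff g)/2) • (star (1 - of ℝ G g) * (1 - of ℝ G g))
           = (-(η.coeff g)) • (1 : MonoidAlgebra ℝ G) + (η.coeff g/2) • of ℝ G g
             + (η.coeff g/2) • of ℝ G g⁻¹ := by
       intro g _
       rw [q_eq]
       module
     have hA : ∑ g ∈ η.coeff.support, (-(η.coeff g)) • (1 : MonoidAlgebra ℝ G) = 0 := by
       rw [← Finset.sum_smul]
       have : ∑ g ∈ η.coeff.support, -(η.coeff g) = -∑ g ∈ η.coeff.support, η.coeff g := by
         rw [Finset.sum_neg_distrib]
       rw [this, hsupp0, neg_zero, zero_smul]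
     have hB : ∑ g ∈ η.coeff.support, (η.coeff g/2) • (of ℝ G g : MonoidAlgebra ℝ G)
         = (1/2 : ℝ) • η := by
       conv_rhs => rw [← sum_smul_of η]
       rw [Finset.smul_sum]
       exact Finset.sum_congr rfl fun g _ => by module
     have hC : ∑ g ∈ η.coeff.support, (η.coeff g/2) • (of ℝ G g⁻¹ : MonoidAlgebra ℝ G)
         = (1/2 : ℝ) • η := by
       conv_rhs => rw [← hstar, star_decomp]
       rw [Finset.smul_sum]
       exact Finset.sum_congr rfl fun g _ => by module
     have hdecomp : ∑ g ∈ η.coeff.support,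
         (-(η.coeff g)/2) • (star (1 - of ℝ G g) * (1 - of ℝ G g)) = η := by
       rw [Finset.sum_congr rfl hd1, Finset.sum_add_distrib, Finset.sum_add_distrib,
         hA, hB, hC]
       module
     have hsos1 : η + lam • box S 1 ∈ SOS (MonoidAlgebra ℝ G) := by
       have e : η + lam • box S 1 = ∑ g ∈ η.coeff.support,
           ((-(η.coeff g)/2) • (star (1 - of ℝ G g) * (1 - of ℝ G g))
             + ((|η.coeff g| / 2) * cq g) • box S 1) := by
         rw [Finset.sum_add_distrib, hdecomp, ← Finset.sum_smul, hlam_def]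
       rw [e]
       refine AddSubmonoid.sum_mem _ fun g _ => ?_
       rcases le_or_gt 0 (η.coeff g) with hpos | hneg
       · rw [abs_of_nonneg hpos]
         have e2 : (-(η.coeff g)/2) • (star (1 - of ℝ G g) * (1 - of ℝ G g))
             + ((η.coeff g / 2) * cq g) • box S 1
             = (η.coeff g / 2) • (cq g • box S 1
               - star (1 - of ℝ G g) * (1 - of ℝ G g)) := by module
         rw [e2]
         exact smul_mem (by positivity) (sle_mem (hleq g))
       · rw [abs_of_neg hneg]
         exact AddSubmonoid.add_mem _
           (smul_mem (by linarith) sq_mem)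
           (smul_mem (mul_nonneg (by linarith) (hcq g)) (box_mem_SOS S 1 le_rfl))
     obtain ⟨c, hc, hcle⟩ := lap_le_box hS hsym n hn
     refine ⟨lam * c, mul_nonneg hlam hc, ?_⟩
     have e3 : η + (lam * c) • box S n
         = (η + lam • box S 1) + lam • (c • box S n - box S 1) := by module
     rw [e3]
     exact AddSubmonoid.add_mem _ hsos1 (smul_mem hlam (sle_mem hcle)))
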